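/- arXiv:2405.06229 — 3 statements merged into one kernel-verified Lean document; each statement's English description precedes it below -/
import Mathlib

section
/- Let k ⊆ l be a finite separable field extension of degree n, and let l ⊆ l' be a field extension with l'/k Galois. Then there is an isomorphism of l'-algebras l' ⊗_k l ≅ ∏_{σ} l', where the product is indexed by the n distinct k-embeddings of l into l'. -/
/-!
Evaluating `l' ⊗[k] l` at every `k`-embedding `σ : l → l'` gives an `l'`-algebra map to
`∏_σ l'`. Its coordinates are the `l'`-linear extensions of the embeddings, which are linearly
independent by Dedekind's lemma. As `l'/k` is normal there are `[l : k] = dim_{l'} (l' ⊗[k] l)`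
embeddings, so these coordinates form a basis of the dual space and the map is bijective.
-/

open TensorProduct Module

theorem LinearMap.pi_bijective_of_linearIndependent {K V ι : Type*} [Field K] [AddCommGroup V]
    [Module K V] [FiniteDimensional K V] [Finite ι] {f : ι → Dual K V}
    (hf : LinearIndependent K f) (hcard : Nat.card ι = finrank K V) :
    Function.Bijective (LinearMap.pi f) := by
  have := Fintype.ofFinite ι
  rw [Nat.card_eq_fintype_card] at hcard
  have hspan : Submodule.span K (Set.range f) = ⊤ :=
    hf.span_eq_top_of_card_eq_finrank' (by rw [hcard, Subspace.dual_finrank_eq])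
  have hinj : Function.Injective (LinearMap.pi f) := by
    rw [← LinearMap.ker_eq_bot, LinearMap.ker_eq_bot']
    intro x hx
    rw [← Module.forall_dual_apply_eq_zero_iff K]
    intro φ
    have : Submodule.span K (Set.range f) ≤ LinearMap.ker (Dual.eval K V x) :=
      Submodule.span_le.mpr (Set.range_subset_iff.mpr fun i => congrFun hx i)
    exact this (hspan ▸ Submodule.mem_top)
  refine ⟨hinj, (LinearMap.injective_iff_surjective_of_finrank_eq_finrank ?_).mp hinj⟩
  rw [Module.finrank_fintype_fun_eq_card, hcard]

namespace Algebra.TensorProduct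

variable (k l l' : Type*) [Field k] [Ring l] [Field l'] [Algebra k l] [Algebra k l']

noncomputable def evalAlgHoms : l' ⊗[k] l →ₐ[l'] ((l →ₐ[k] l') → l') :=
  AlgHom.pi fun σ => lift (Algebra.ofId l' l') σ fun _ _ => Commute.all _ _

variable {k l l'}

theorem evalAlgHoms_apply (x : l' ⊗[k] l) (σ : l →ₐ[k] l') :
    evalAlgHoms k l l' x σ = σ.toLinearMap.liftBaseChange l' x := by
  induction x using TensorProduct.induction_on with
  | zero => simp
  | tmul a b => simp [evalAlgHoms, LinearMap.liftBaseChange_tmul]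
  | add x y hx hy => simp_all

theorem evalAlgHoms_toLinearMap :
    (evalAlgHoms k l l').toLinearMap =
      LinearMap.pi fun σ : l →ₐ[k] l' => LinearMap.liftBaseChangeEquiv l' σ.toLinearMap :=
  LinearMap.ext fun x => funext (evalAlgHoms_apply x)

theorem linearIndependent_liftBaseChange_algHom :
    LinearIndependent l' fun σ : l →ₐ[k] l' => LinearMap.liftBaseChangeEquiv l' σ.toLinearMap :=
  (linearIndependent_algHom_toLinearMap k l l').map' _ (LinearEquiv.ker _)

theorem evalAlgHoms_bijective [FiniteDimensional k l] [Finite (l →ₐ[k] l')]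
    (hcard : Nat.card (l →ₐ[k] l') = finrank k l) :
    Function.Bijective (evalAlgHoms k l l') := by
  rw [← AlgHom.coe_toLinearMap, evalAlgHoms_toLinearMap]
  exact LinearMap.pi_bijective_of_linearIndependent linearIndependent_liftBaseChange_algHom
    (by rw [hcard, finrank_baseChange])

end Algebra.TensorProduct

theorem AlgHom.natCard_of_normal (k l l' : Type*) [Field k] [Field l] [Field l']
    [Algebra k l] [Algebra k l'] [Algebra l l'] [IsScalarTower k l l']
    [FiniteDimensional k l] [Algebra.IsSeparable k l] [Normal k l'] :
    Nat.card (l →ₐ[k] l') = finrank k l :=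
  AlgHom.natCard_of_splits k l l' fun x => by
    rw [← minpoly.algebraMap_eq (algebraMap l l').injective x]
    exact Normal.splits inferInstance _

/-- Let `k ⊆ l` be a finite separable field extension and `l ⊆ l'` a field extension with
`l'/k` Galois. Then the number of `k`-embeddings `l → l'` equals `[l : k]`, and there is an
isomorphism of `l'`-algebras `l' ⊗[k] l ≅ ∏_{σ : l →ₐ[k] l'} l'`. -/
theorem tensor_galois_iso_prod (k l l' : Type*) [Field k] [Field l] [Field l']
    [Algebra k l] [Algebra k l'] [Algebra l l'] [IsScalarTower k l l']
    [FiniteDimensional k l] [Algebra.IsSeparable k l] [IsGalois k l'] :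
    Nat.card (l →ₐ[k] l') = Module.finrank k l ∧
      Nonempty ((l' ⊗[k] l) ≃ₐ[l'] ((l →ₐ[k] l') → l')) := by
  have hcard := AlgHom.natCard_of_normal k l l'
  exact ⟨hcard, ⟨.ofBijective _ (Algebra.TensorProduct.evalAlgHoms_bijective hcard)⟩⟩
end

section
/- Let A be a commutative noetherian ring, A → A' a faithfully flat ring map, and N an A-module such that N ⊗_A A' is an injective A'-module. Then N is an injective A-module. -/
open TensorProduct LinearMap

section Aux

variable (A A' : Type*) [CommRing A] [CommRing A'] [Algebra A A']
variable (N : Type*) [AddCommGroup N] [Module A N]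

/-- Naturality of the base-change hom map. -/
lemma tensorProduct_naturality {M₁ M₂ : Type*} [AddCommGroup M₁] [Module A M₁]
    [AddCommGroup M₂] [Module A M₂] (g : M₁ →ₗ[A] M₂)
    (x : A' ⊗[A] (M₂ →ₗ[A] N)) :
    LinearMap.tensorProduct A A' M₁ N (LinearMap.lTensor A' (LinearMap.lcomp A N g) x)
      = (LinearMap.tensorProduct A A' M₂ N x) ∘ₗ (g.baseChange A') := by
  induction x using TensorProduct.induction_on with
  | zero => simp
  | tmul a f =>
      ext m
      simp [LinearMap.tensorProduct, LinearMap.baseChange_comp, lcomp_apply']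
  | add x y hx hy => simp [map_add, hx, hy, LinearMap.add_comp]

/-- Injectivity of the base-change hom map for finite free modules, given `A'` flat. -/
lemma tensorProduct_injective_free [Module.Flat A A'] (n : ℕ) :
    Function.Injective (LinearMap.tensorProduct A A' (Fin n → A) N) := by
  set e := LinearEquiv.lTensor A' (LinearEquiv.piRing A N (Fin n) A)
  set p := TensorProduct.piRight A A' A' (fun _ : Fin n => N)
  have key : ∀ x : A' ⊗[A] ((Fin n → A) →ₗ[A] N), (p (e x) : Fin n → A' ⊗[A] N)
      = fun i => (LinearMap.tensorProduct A A' (Fin n → A) N x) (1 ⊗ₜ Pi.single i 1) := by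
    intro x
    induction x using TensorProduct.induction_on with
    | zero => funext i; simp
    | tmul a f =>
        funext i
        simp [e, p, LinearMap.tensorProduct, TensorProduct.smul_tmul',
          LinearEquiv.piRing_apply]
    | add x y hx hy => funext i; simp_all [map_add]
  intro x y hxy
  apply e.injective
  apply p.injective
  rw [key, key, hxy]

lemma tensorProduct_injective_fg [Module.Flat A A'] (M : Type*) [AddCommGroup M]
    [Module A M] [Module.Finite A M] :
    Function.Injective (LinearMap.tensorProduct A A' M N) := by
  obtain ⟨n, π, hπ⟩ := Module.Finite.exists_fin' A M
  have hc : Function.Injective (LinearMap.lcomp A N π) := by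
    intro f g hfg
    exact (LinearMap.cancel_right hπ).mp hfg
  have hl : Function.Injective (LinearMap.lTensor A' (LinearMap.lcomp A N π)) :=
    Module.Flat.lTensor_preserves_injective_linearMap _ hc
  intro x y hxy
  apply hl
  apply tensorProduct_injective_free A A' N n
  rw [tensorProduct_naturality, tensorProduct_naturality, hxy]

/-- Linear maps out of `A' ⊗[A] A` are determined by their value at `1 ⊗ 1`. -/
lemma ext_of_one_tmul_one {P : Type*} [AddCommGroup P] [Module A' P]
    (h₁ h₂ : A' ⊗[A] A →ₗ[A'] P) (h : h₁ (1 ⊗ₜ 1) = h₂ (1 ⊗ₜ 1)) : h₁ = h₂ := by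
  ext x
  induction x using TensorProduct.induction_on with
  | zero => simp
  | tmul a' a =>
      have key : (a' ⊗ₜ[A] a : A' ⊗[A] A) = (a' * algebraMap A A' a) • ((1 : A') ⊗ₜ[A] (1 : A)) := by
        rw [TensorProduct.smul_tmul', smul_eq_mul, mul_one]
        have : a' ⊗ₜ[A] a = a' ⊗ₜ[A] (a • (1 : A)) := by rw [smul_eq_mul, mul_one]
        rw [this, TensorProduct.tmul_smul, TensorProduct.smul_tmul',
          Algebra.smul_def, mul_comm]
      rw [key, map_smul, map_smul, h]
  | add x y hx hy => simp [map_add, hx, hy]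

lemma tensorProduct_surjective_self :
    Function.Surjective (LinearMap.tensorProduct A A' A N) := by
  intro g
  set j : N →ₗ[A] (A →ₗ[A] N) := (LinearMap.ringLmapEquivSelf A A N).symm.toLinearMap
  have key : ∀ x : A' ⊗[A] N,
      (LinearMap.tensorProduct A A' A N) (LinearMap.lTensor A' j x) (1 ⊗ₜ 1) = x := by
    intro x
    induction x using TensorProduct.induction_on with
    | zero => simp
    | tmul a' n =>
        simp [j, LinearMap.tensorProduct, TensorProduct.smul_tmul']
    | add x y hx hy => simp_all [map_add, LinearMap.add_apply]
  refine ⟨LinearMap.lTensor A' j (g (1 ⊗ₜ 1)), ?_⟩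
  apply ext_of_one_tmul_one
  rw [key]

lemma surjective_of_lTensor_surjective [Module.FaithfullyFlat A A']
    {M₁ M₂ : Type*} [AddCommGroup M₁] [Module A M₁] [AddCommGroup M₂] [Module A M₂]
    (f : M₁ →ₗ[A] M₂) (hf : Function.Surjective (LinearMap.lTensor A' f)) :
    Function.Surjective f := by
  have h0 : LinearMap.lTensor A' ((LinearMap.range f).mkQ) = 0 := by
    refine LinearMap.ext fun y => ?_
    obtain ⟨x, rfl⟩ := hf y
    have : (LinearMap.range f).mkQ ∘ₗ f = 0 := by
      ext m; simp [Submodule.Quotient.mk_eq_zero]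
    calc LinearMap.lTensor A' (LinearMap.range f).mkQ (LinearMap.lTensor A' f x)
        = LinearMap.lTensor A' ((LinearMap.range f).mkQ ∘ₗ f) x := by
          rw [LinearMap.lTensor_comp]; rfl
      _ = 0 := by rw [this, LinearMap.lTensor_zero]; rfl
  have := (Module.FaithfullyFlat.zero_iff_lTensor_zero A A' ((LinearMap.range f).mkQ)).2 h0
  rw [← LinearMap.range_eq_top]
  rw [← Submodule.ker_mkQ (LinearMap.range f), this, LinearMap.ker_zero]

end Aux

/-- Let `A` be a commutative noetherian ring, `A → A'` a faithfully flat algebra, and `N`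
an `A`-module such that `A' ⊗[A] N` is an injective `A'`-module. Then `N` is an injective
`A`-module. -/
theorem injective_of_faithfully_flat_descent (A A' : Type*) [CommRing A] [IsNoetherianRing A]
    [CommRing A'] [Algebra A A'] [Module.FaithfullyFlat A A']
    (N : Type*) [AddCommGroup N] [Module A N]
    (h : Module.Injective A' (A' ⊗[A] N)) : Module.Injective A N := by
  haveI := h
  apply Module.Baer.injective
  intro I f
  -- the restriction map
  set r : (A →ₗ[A] N) →ₗ[A] (I →ₗ[A] N) := LinearMap.lcomp A N I.subtype with hr
  have hsurj : Function.Surjective r := by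
    apply surjective_of_lTensor_surjective A A'
    intro x
    -- extend φ_I x along the injection A' ⊗ I → A' ⊗ A
    have hinj : Function.Injective (I.subtype.baseChange A') := by
      rw [LinearMap.baseChange_eq_ltensor]
      exact Module.Flat.lTensor_preserves_injective_linearMap _ I.injective_subtype
    obtain ⟨H, hH⟩ := Module.Injective.extension_property A' (A' ⊗[A] N) _ _
      (I.subtype.baseChange A') hinj (LinearMap.tensorProduct A A' I N x)
    obtain ⟨u, hu⟩ := tensorProduct_surjective_self A A' N H
    refine ⟨u, ?_⟩
    apply tensorProduct_injective_fg A A' N I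
    rw [tensorProduct_naturality, hu, hH]
  obtain ⟨g, hg⟩ := hsurj f
  exact ⟨g, fun x hx => by rw [← hg]; rfl⟩
end

section
/- Let A be a commutative ring and F an A-module. Then F is finitely generated if and only if for every filtered system (N_λ) of A-modules with injective transition maps, the natural map colim_λ Hom_A(F, N_λ) → Hom_A(F, colim_λ N_λ) is bijective. -/
/-! Each stage `G i` embeds into the colimit, so a map from `F` factors through `G i` exactly when
its range lies in the image of `G i`. For finitely generated `F` that range is a compact element
of the submodule lattice, hence lies in one of the directed images. Conversely, `F` is the
colimit of its finitely generated submodules along inclusions, and factoring the identity of `F`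
through one stage shows that this submodule is all of `F`. -/

universe u

namespace LinearMap

variable {R M N P : Type*} [Semiring R] [AddCommMonoid M] [AddCommMonoid N] [AddCommMonoid P]
  [Module R M] [Module R N] [Module R P]

theorem exists_comp_eq_of_range_le {f : N →ₗ[R] P} (hf : Function.Injective f) {g : M →ₗ[R] P}
    (h : range g ≤ range f) : ∃ k : M →ₗ[R] N, f ∘ₗ k = g :=
  ⟨(LinearEquiv.ofInjective f hf).symm.toLinearMap ∘ₗ g.codRestrict _ fun x => h ⟨x, rfl⟩, by
    ext x
    exact congrArg Subtype.val
      ((LinearEquiv.ofInjective f hf).apply_symm_apply ⟨g x, h ⟨x, rfl⟩⟩)⟩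

end LinearMap

namespace Module.DirectLimit

variable {ι : Type*} [Preorder ι] [DecidableEq ι]

section Semiring

variable {R : Type*} [Semiring R] {G : ι → Type*} [∀ i, AddCommMonoid (G i)] [∀ i, Module R (G i)]
  {f : ∀ i j, i ≤ j → G i →ₗ[R] G j}

theorem of_injective [IsDirectedOrder ι] [DirectedSystem G (f · · ·)]
    (hf : ∀ i j h, Function.Injective (f i j h)) (i : ι) :
    Function.Injective (of R ι G f i) := fun _ _ h =>
  let ⟨j, hij, hx⟩ := exists_eq_of_of_eq h
  hf i j hij hx

theorem range_of_mono : Monotone fun i => LinearMap.range (of R ι G f i) := by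
  rintro i j hij _ ⟨x, rfl⟩
  exact ⟨f i j hij x, of_f⟩

theorem iSup_range_of [Nonempty ι] [IsDirectedOrder ι] :
    ⨆ i, LinearMap.range (of R ι G f i) = ⊤ :=
  eq_top_iff.2 fun z _ =>
    let ⟨i, x, hx⟩ := exists_of z
    Submodule.mem_iSup_of_mem i ⟨x, hx⟩

theorem exists_range_le_range_of [Nonempty ι] [IsDirectedOrder ι] {M : Type*} [AddCommMonoid M]
    [Module R M] [Module.Finite R M] (φ : M →ₗ[R] DirectLimit G f) :
    ∃ i, LinearMap.range φ ≤ LinearMap.range (of R ι G f i) := by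
  have hφ : IsCompactElement (LinearMap.range φ) := by
    rw [← Submodule.fg_iff_compact, LinearMap.range_eq_map]
    exact Module.Finite.fg_top.map φ
  obtain ⟨_, ⟨i, rfl⟩, hi⟩ :=
    (CompleteLattice.isCompactElement_iff_le_of_directed_sSup_le _ _).1 hφ _ (Set.range_nonempty _)
      (directedOn_range.2 range_of_mono.directed_le)
      (by rw [sSup_range, iSup_range_of]; exact le_top)
  exact ⟨i, hi⟩

-- Without injective transition maps this would need `M` to be finitely presented.
theorem exists_of_comp_eq [Nonempty ι] [IsDirectedOrder ι] [DirectedSystem G (f · · ·)]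
    (hf : ∀ i j h, Function.Injective (f i j h)) {M : Type*} [AddCommMonoid M] [Module R M]
    [Module.Finite R M] (φ : M →ₗ[R] DirectLimit G f) :
    ∃ i, ∃ g : M →ₗ[R] G i, of R ι G f i ∘ₗ g = φ :=
  let ⟨i, hi⟩ := exists_range_le_range_of φ
  ⟨i, LinearMap.exists_comp_eq_of_range_le (of_injective hf i) hi⟩

end Semiring

section Hom

variable {R : Type*} [CommSemiring R] {M : Type*} [AddCommMonoid M] [Module R M]
  {G : ι → Type*} [∀ i, AddCommMonoid (G i)] [∀ i, Module R (G i)]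
  {f : ∀ i j, i ≤ j → G i →ₗ[R] G j}

theorem lift_llcomp_injective [IsDirectedOrder ι] (hof : ∀ i, Function.Injective (of R ι G f i))
    (Hg) : Function.Injective (lift R ι (fun i => M →ₗ[R] G i)
      (fun i j h => LinearMap.llcomp R M (G i) (G j) (f i j h))
      (fun i => LinearMap.llcomp R M (G i) (DirectLimit G f) (of R ι G f i)) Hg) :=
  lift_injective _ _ fun i _ _ h => LinearMap.ext fun x => hof i (LinearMap.congr_fun h x)

theorem lift_llcomp_surjective [Nonempty ι] [IsDirectedOrder ι] [DirectedSystem G (f · · ·)]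
    (hf : ∀ i j h, Function.Injective (f i j h)) [Module.Finite R M]
    (Hg) : Function.Surjective (lift R ι (fun i => M →ₗ[R] G i)
      (fun i j h => LinearMap.llcomp R M (G i) (G j) (f i j h))
      (fun i => LinearMap.llcomp R M (G i) (DirectLimit G f) (of R ι G f i)) Hg) := fun φ =>
  let ⟨i, g, hg⟩ := exists_of_comp_eq hf φ
  ⟨of _ _ _ _ i g, by rw [lift_of]; exact hg⟩

end Hom

end Module.DirectLimit

open Module.DirectLimit

namespace Module.fgSystem

variable {R M : Type*} [Semiring R] [AddCommMonoid M] [Module R M] [DecidableEq (Submodule R M)]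

theorem finite_of_of_comp_eq_equiv_symm (N : {N : Submodule R M // N.FG}) (g : M →ₗ[R] N)
    (hg : of R _ _ (fgSystem R M) N ∘ₗ g = (equiv R M).symm.toLinearMap) : Module.Finite R M :=
  have : Module.Finite R N := Module.Finite.iff_fg.2 N.2
  have hN : N.1.subtype ∘ₗ g = LinearMap.id := by
    rw [← equiv_comp_of, LinearMap.comp_assoc, hg]
    exact LinearMap.ext (equiv R M).apply_symm_apply
  Module.Finite.of_surjective N.1.subtype fun x => ⟨g x, LinearMap.congr_fun hN x⟩

end Module.fgSystem

/-- An `A`-module `F` is finitely generated if and only if, for every filtered (directed)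
system of `A`-modules `(G_λ)` with injective transition maps, the natural map
`colim Hom_A(F, G_λ) → Hom_A(F, colim G_λ)` is bijective. -/
theorem finiteGeneration_iff_hom_commutes_with_injective_filtered_colimits
    (A : Type u) [CommRing A] (F : Type u) [AddCommGroup F] [Module A F] :
    Module.Finite A F ↔
      ∀ (ι : Type u) [Preorder ι] [IsDirected ι (· ≤ ·)] [Nonempty ι] [DecidableEq ι]
        (G : ι → Type u) [∀ i, AddCommGroup (G i)] [∀ i, Module A (G i)]
        (f : ∀ i j, i ≤ j → G i →ₗ[A] G j) [DirectedSystem G (fun i j h => f i j h)]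
        (hinj : ∀ (i j : ι) (h : i ≤ j), Function.Injective (f i j h)),
        Function.Bijective
          (Module.DirectLimit.lift A ι (fun i => F →ₗ[A] G i)
            (fun i j h => LinearMap.llcomp A F (G i) (G j) (f i j h))
            (fun i => LinearMap.llcomp A F (G i) (Module.DirectLimit G f)
              (Module.DirectLimit.of A ι G f i))
            (by intro i j hij x; ext y; exact Module.DirectLimit.of_f)) := by
  constructor
  · intro _ ι _ _ _ _ G _ _ f _ hinj
    exact ⟨lift_llcomp_injective (of_injective hinj) _, lift_llcomp_surjective hinj _⟩
  · intro H
    classical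
    obtain ⟨c, hc⟩ := (H _ _ (Module.fgSystem A F) fun _ _ _ => Submodule.inclusion_injective _).2
      (Module.fgSystem.equiv A F).symm.toLinearMap
    obtain ⟨N, g, rfl⟩ := exists_of c
    rw [lift_of] at hc
    exact Module.fgSystem.finite_of_of_comp_eq_equiv_symm N g hc
end
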